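/- For every nonnegative integer m, the elements 1, g(t), Dg(t), …, D^m g(t) of ℚ⟦t⟧ are linearly independent over ℚ[t]: if p(t), p_0(t), p_1(t), …, p_m(t) ∈ ℚ[t] satisfy p(t) + ∑_{j=0}^{m} p_j(t)·D^j g(t) = 0 in ℚ⟦t⟧, then p = p_0 = p_1 = ⋯ = p_m = 0. -/

import Mathlib

/-!
The series `E = exp t - 1` is transcendental over `ℚ[t]`: in a relation
`∑ aₖ(t) e^{kt} = 0`, differentiating `N = deg a₀ + 1` times kills `a₀` and replaces each other
`aₖ` by `(d/dt + k)^N aₖ`, an injective operation on polynomials, so induction on the number of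
terms applies.
On the other hand `D` maps `ℚ[t][E]` into itself (`D E = t (E + 1)`), and `E g = t + t E / 2`,
so `E^{j+1} D^j g` is a polynomial in `E` over `ℚ[t]` with constant term `(-1)^j j! t^{j+1}`.
Multiplying a relation `p + ∑_{j ≤ n} p_j D^j g = 0` by `E^{n+1}` and setting `E = 0` in the
resulting polynomial identity leaves `p_n (-1)^n n! t^{n+1} = 0`; so the top coefficient vanishes,
and the others follow by induction on `n`.
-/

open Polynomial PowerSeries

/-- The Bernoulli generating series `h(t) = t/(e^t - 1)`. -/
noncomputable def hps : PowerSeries ℚ := bernoulliPowerSeries ℚ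

/-- `g(t) = h(t) + t/2`. -/
noncomputable def gps : PowerSeries ℚ :=
  hps + PowerSeries.C (1/2 : ℚ) * PowerSeries.X

/-- The derivation `D = t·(d/dt)` on `ℚ⟦t⟧`. -/
noncomputable def Dop (φ : PowerSeries ℚ) : PowerSeries ℚ :=
  PowerSeries.X * φ.derivativeFun

namespace Polynomial

variable {R : Type*} [Semiring R] [NoZeroDivisors R]

theorem eq_zero_of_derivative_add_C_mul_eq_zero {c : R} (hc : c ≠ 0) {a : R[X]}
    (h : derivative a + C c * a = 0) : a = 0 := by
  by_contra ha
  have := congrArg (coeff · a.natDegree) h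
  simp only [coeff_add, coeff_derivative, coeff_C_mul, coeff_zero,
    coeff_eq_zero_of_natDegree_lt (Nat.lt_succ_self _), zero_mul, zero_add] at this
  exact mul_ne_zero hc (leadingCoeff_ne_zero.mpr ha) this

theorem eq_zero_of_iterate_derivative_add_C_mul_eq_zero {c : R} (hc : c ≠ 0) {a : R[X]} {n : ℕ}
    (h : (fun b => derivative b + C c * b)^[n] a = 0) : a = 0 := by
  induction n generalizing a with
  | zero => exact h
  | succ n ih => exact eq_zero_of_derivative_add_C_mul_eq_zero hc (ih h)

end Polynomial

namespace PowerSeries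

theorem algebraMap_polynomial_eq_coe {R : Type*} [CommSemiring R] (a : R[X]) :
    algebraMap R[X] R⟦X⟧ a = a := by
  rw [algebraMap_apply', Algebra.algebraMap_self, map_id, id]

variable {K : Type*} [Field K] [CharZero K]

theorem derivative_coe_mul_exp_pow (a : K[X]) (k : ℕ) :
    d⁄dX K ((a : K⟦X⟧) * exp K ^ k) =
      ((Polynomial.derivative a + Polynomial.C (k : K) * a : K[X]) : K⟦X⟧) * exp K ^ k := by
  rw [Derivation.leibniz, derivative_pow, derivative_exp, derivative_coe]
  rcases k with _ | k
  · simp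
  · rw [Polynomial.coe_add, Polynomial.coe_mul, Polynomial.coe_C, map_natCast,
      add_tsub_cancel_right, smul_eq_mul, smul_eq_mul]
    ring

theorem iterate_derivative_coe_mul_exp_pow (a : K[X]) (k n : ℕ) :
    (d⁄dX K)^[n] ((a : K⟦X⟧) * exp K ^ k) =
      (((fun b => Polynomial.derivative b + Polynomial.C (k : K) * b)^[n] a : K[X]) : K⟦X⟧) *
        exp K ^ k := by
  induction n generalizing a with
  | zero => rfl
  | succ n ih => rw [Function.iterate_succ_apply, Function.iterate_succ_apply, ← ih,
      derivative_coe_mul_exp_pow]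

theorem iterate_derivative_sum_coe_mul_exp_pow (s : Finset ℕ) (a : ℕ → K[X]) (n : ℕ) :
    (d⁄dX K)^[n] (∑ k ∈ s, (a k : K⟦X⟧) * exp K ^ k) =
      ∑ k ∈ s, (((fun b => Polynomial.derivative b + Polynomial.C (k : K) * b)^[n] (a k) : K[X])
        : K⟦X⟧) * exp K ^ k := by
  simpa only [Module.End.pow_apply, Derivation.coeFn_coe, iterate_derivative_coe_mul_exp_pow]
    using map_sum ((d⁄dX K : Module.End K K⟦X⟧) ^ n) (fun k => (a k : K⟦X⟧) * exp K ^ k) s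

theorem eq_zero_of_sum_coe_mul_exp_pow_eq_zero (N : ℕ) (a : ℕ → K[X])
    (h : ∑ k ∈ Finset.range N, (a k : K⟦X⟧) * exp K ^ k = 0) : ∀ k < N, a k = 0 := by
  induction N generalizing a with
  | zero => simp
  | succ N ih =>
    have hder := congrArg (d⁄dX K)^[(a 0).natDegree + 1] h
    rw [iterate_derivative_sum_coe_mul_exp_pow, Finset.sum_range_succ', iterate_map_zero] at hder
    simp only [Nat.cast_zero, map_zero, zero_mul, add_zero, pow_zero, mul_one,
      iterate_derivative_eq_zero (Nat.lt_succ_self _), Polynomial.coe_zero, pow_succ',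
      mul_left_comm _ (exp K), ← Finset.mul_sum, mul_eq_zero, (isUnit_exp K).ne_zero,
      false_or] at hder
    have htail : ∀ k < N, a (k + 1) = 0 := fun k hk =>
      Polynomial.eq_zero_of_iterate_derivative_add_C_mul_eq_zero
        (by exact_mod_cast Nat.succ_ne_zero k) (ih _ hder k hk)
    rw [Finset.sum_range_succ', Finset.sum_eq_zero fun k hk => by
      rw [htail k (Finset.mem_range.mp hk), Polynomial.coe_zero, zero_mul]] at h
    intro k hk
    rcases k with _ | k
    · simpa using h
    · exact htail k (by omega)

theorem transcendental_exp : Transcendental K[X] (exp K) := by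
  rw [transcendental_iff_injective, injective_iff_map_eq_zero]
  intro q hq
  rw [aeval_eq_sum_range] at hq
  simp only [Algebra.smul_def, algebraMap_polynomial_eq_coe] at hq
  refine Polynomial.ext fun k => ?_
  rw [Polynomial.coeff_zero]
  rcases le_or_gt k q.natDegree with hk | hk
  · exact eq_zero_of_sum_coe_mul_exp_pow_eq_zero _ _ hq k (Nat.lt_succ_of_le hk)
  · exact coeff_eq_zero_of_natDegree_lt hk

theorem transcendental_exp_sub_one : Transcendental K[X] (exp K - 1) := by
  have hX : Transcendental K[X] (Polynomial.X - Polynomial.C 1 : K[X][X]) :=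
    Polynomial.transcendental _ (by rw [natDegree_X_sub_C]; exact one_ne_zero)
      (by rw [leadingCoeff_X_sub_C]; exact one_mem _)
  simpa using transcendental_exp.aeval_of_transcendental hX

end PowerSeries

theorem Dop_apply (f : ℚ⟦X⟧) : Dop f = PowerSeries.X * d⁄dX ℚ f := rfl

theorem Dop_add (f g : ℚ⟦X⟧) : Dop (f + g) = Dop f + Dop g := by
  simp only [Dop_apply, map_add, mul_add]

theorem Dop_mul (f g : ℚ⟦X⟧) : Dop (f * g) = Dop f * g + f * Dop g := by
  simp only [Dop_apply, Derivation.leibniz, smul_eq_mul]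
  ring

theorem Dop_pow (f : ℚ⟦X⟧) (n : ℕ) : Dop (f ^ n) = n * f ^ (n - 1) * Dop f := by
  simp only [Dop_apply, PowerSeries.derivative_pow]
  ring

theorem Dop_coe (a : ℚ[X]) : Dop a = ((Polynomial.X * derivative a : ℚ[X]) : ℚ⟦X⟧) := by
  rw [Dop_apply, derivative_coe, Polynomial.coe_mul, Polynomial.coe_X]

theorem Dop_exp_sub_one : Dop (exp ℚ - 1) = PowerSeries.X * exp ℚ := by
  rw [Dop_apply, map_sub, derivative_exp, PowerSeries.derivative_one, sub_zero]

theorem exists_aeval_eq_Dop_aeval (q : ℚ[X][X]) :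
    ∃ r : ℚ[X][X], aeval (exp ℚ - 1) r = Dop (aeval (exp ℚ - 1) q) := by
  induction q using Polynomial.induction_on with
  | C a =>
    refine ⟨Polynomial.C (Polynomial.X * derivative a), ?_⟩
    rw [aeval_C, aeval_C]
    exact (Dop_coe a).symm
  | add q q' hq hq' =>
    obtain ⟨r, hr⟩ := hq
    obtain ⟨r', hr'⟩ := hq'
    exact ⟨r + r', by rw [map_add, map_add, hr, hr', Dop_add]⟩
  | monomial n a h =>
    obtain ⟨r, hr⟩ := h
    refine ⟨r * Polynomial.X + Polynomial.C a * Polynomial.X ^ n *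
      (Polynomial.C Polynomial.X * (Polynomial.X + 1)), ?_⟩
    have hsucc : aeval (exp ℚ - 1) (Polynomial.C a * Polynomial.X ^ (n + 1)) =
        aeval (exp ℚ - 1) (Polynomial.C a * Polynomial.X ^ n) * (exp ℚ - 1) := by
      rw [pow_succ, ← mul_assoc, map_mul, aeval_X]
    rw [hsucc, Dop_mul, ← hr, Dop_exp_sub_one]
    simp [algebraMap_polynomial_eq_coe]

theorem exp_sub_one_mul_gps : (exp ℚ - 1) * gps =
    PowerSeries.X + PowerSeries.C (1 / 2 : ℚ) * PowerSeries.X * (exp ℚ - 1) := by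
  rw [gps, hps, mul_add, mul_comm _ (bernoulliPowerSeries ℚ),
    bernoulliPowerSeries_mul_exp_sub_one]
  ring

open Nat in
theorem exists_aeval_eq_pow_mul_iterate_Dop_gps (j : ℕ) :
    ∃ q : ℚ[X][X], aeval (exp ℚ - 1) q = (exp ℚ - 1) ^ (j + 1) * Dop^[j] gps ∧
      q.eval 0 = Polynomial.C ((-1) ^ j * j ! : ℚ) * Polynomial.X ^ (j + 1) := by
  induction j with
  | zero =>
    refine ⟨Polynomial.C Polynomial.X +
      Polynomial.C (Polynomial.C (1 / 2 : ℚ) * Polynomial.X) * Polynomial.X, ?_, by simp⟩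
    rw [zero_add, pow_one, Function.iterate_zero_apply, exp_sub_one_mul_gps]
    simp [algebraMap_polynomial_eq_coe]
  | succ j ih =>
    obtain ⟨q, hq, hq0⟩ := ih
    obtain ⟨r, hr⟩ := exists_aeval_eq_Dop_aeval q
    refine ⟨Polynomial.X * r - Polynomial.C (Polynomial.C ((j : ℚ) + 1) * Polynomial.X) *
      (Polynomial.X + 1) * q, ?_, ?_⟩
    · rw [Function.iterate_succ_apply', map_sub, map_mul, map_mul, map_mul, hr, hq, Dop_mul,
        Dop_pow, Dop_exp_sub_one]
      simp only [aeval_X, cast_add, cast_one, add_tsub_cancel_right, map_add, map_natCast, map_one,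
        map_mul, aeval_C, algebraMap_polynomial_eq_coe, Polynomial.coe_X, sub_add_cancel]
      ring
    · simp only [map_add, map_natCast, map_one, map_mul, eval_sub, eval_mul, eval_X, zero_mul,
        eval_add, eval_natCast, eval_one, eval_C, zero_add, mul_one, hq0, map_pow, map_neg,
        zero_sub, factorial_succ, cast_mul, cast_add, cast_one]
      ring

theorem eq_zero_of_add_sum_range_succ_mul_iterate_Dop_gps_eq_zero (n : ℕ) (p : ℚ[X])
    (pj : ℕ → ℚ[X])
    (h : (p : ℚ⟦X⟧) + ∑ j ∈ Finset.range (n + 1), (pj j : ℚ⟦X⟧) * Dop^[j] gps = 0) :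
    pj n = 0 := by
  choose q hq hq0 using exists_aeval_eq_pow_mul_iterate_Dop_gps
  set Q : ℚ[X][X] := Polynomial.C p * Polynomial.X ^ (n + 1) +
    ∑ j ∈ Finset.range (n + 1), Polynomial.C (pj j) * Polynomial.X ^ (n - j) * q j
  have hQ : aeval (exp ℚ - 1) Q = 0 := by
    suffices aeval (exp ℚ - 1) Q = (exp ℚ - 1) ^ (n + 1) *
        ((p : ℚ⟦X⟧) + ∑ j ∈ Finset.range (n + 1), (pj j : ℚ⟦X⟧) * Dop^[j] gps) by
      rw [this, h, mul_zero]
    simp only [Q, map_add, map_mul, map_sum, map_pow, aeval_C, aeval_X, hq,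
      algebraMap_polynomial_eq_coe, mul_add, Finset.mul_sum]
    refine congrArg₂ _ (mul_comm _ _) (Finset.sum_congr rfl fun j hj => ?_)
    rw [show n + 1 = n - j + (j + 1) by have := Finset.mem_range.mp hj; omega, pow_add]
    ring
  have hQ0 : Q = 0 := injective_iff_map_eq_zero _ |>.mp
    (transcendental_iff_injective.mp PowerSeries.transcendental_exp_sub_one) Q hQ
  have := congrArg (Polynomial.eval 0) hQ0
  simp only [Q, Finset.sum_range_succ, tsub_self, pow_zero, mul_one, eval_add, eval_mul, eval_C,
    eval_pow, eval_X, ne_eq, Nat.add_eq_zero_iff, one_ne_zero, and_false, not_false_eq_true,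
    zero_pow, mul_zero, eval_finsetSum, hq0, map_mul, map_pow, map_neg, map_one, map_natCast,
    zero_add, eval_zero] at this
  rw [Finset.sum_eq_zero fun j hj => by
    rw [zero_pow (by have := Finset.mem_range.mp hj; omega), mul_zero, zero_mul], zero_add] at this
  simpa [Nat.factorial_ne_zero] using this

theorem eq_zero_of_add_sum_mul_iterate_Dop_gps_eq_zero (n : ℕ) (p : ℚ[X]) (pj : ℕ → ℚ[X])
    (h : (p : ℚ⟦X⟧) + ∑ j ∈ Finset.range n, (pj j : ℚ⟦X⟧) * Dop^[j] gps = 0) :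
    p = 0 ∧ ∀ j < n, pj j = 0 := by
  induction n with
  | zero => simpa using h
  | succ n ih =>
    have hn := eq_zero_of_add_sum_range_succ_mul_iterate_Dop_gps_eq_zero n p pj h
    rw [Finset.sum_range_succ, hn, Polynomial.coe_zero, zero_mul, add_zero] at h
    obtain ⟨hp, hpj⟩ := ih h
    exact ⟨hp, fun j hj => (Nat.lt_succ_iff_lt_or_eq.mp hj).elim (hpj j) (· ▸ hn)⟩

theorem g_linear_independent (m : ℕ) (p : Polynomial ℚ) (pj : ℕ → Polynomial ℚ)
    (h : (p : PowerSeries ℚ)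
      + ∑ j ∈ Finset.range (m + 1), (pj j : PowerSeries ℚ) * Dop^[j] gps = 0) :
    p = 0 ∧ ∀ j ≤ m, pj j = 0 := by
  obtain ⟨hp, hpj⟩ := eq_zero_of_add_sum_mul_iterate_Dop_gps_eq_zero (m + 1) p pj h
  exact ⟨hp, fun j hj => hpj j (Nat.lt_succ_of_le hj)⟩
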